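/- arXiv:0912.0330 — 4 statements merged into one kernel-verified Lean document; each statement's English description precedes it below -/
import Mathlib

section
/- For every ε > 0 and every R > 1 there exist constants A > 1 and C > 0, depending only on ε and R, with the following property: for every continuous function k : ℝ → ℝ with k ≥ 0 on [0,∞) and k(r) ≥ (1+ε)/(r² log r) for all r > R, and every twice continuously differentiable f : ℝ → ℝ with f''(r) = k(r) f(r) for r ≥ 0, f(0) = 0 and f'(0) = 1, one has f(r) ≥ r (log r)^{1+ε} / C for all r ≥ A. -/
/-!
Comparison with an explicit subsolution. Since `k ≥ 0`, a Jacobi field is convex and increasing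
as long as it stays nonnegative, which gives `f r ≥ r` and `f' ≥ 1` on `[0, ∞)`. The function
`G r = r (log r)^(1+ε) + 2ε(1+ε) r (log r)^ε` satisfies `G'' ≤ (1+ε)/(r² log r) G ≤ k G` once
`log r ≥ 2ε(1+ε)`: the bare `r (log r)^(1+ε)` misses by `ε(1+ε) (log r)^(ε-1) / r`, and the
lower-order term absorbs that error. For `c` small, depending only on `ε` and `R`, the difference
`w = f - c G` starts at `A` with `w ≥ 0`, `w' > 0` and satisfies `w'' ≥ k w`; a first-exit argument
shows that `w'` never vanishes, so `w` stays nonnegative.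
-/

open Real Set Filter Topology

section SecondOrderComparison

variable {w w' w'' q : ℝ → ℝ} {a : ℝ}

theorem le_and_deriv_le_of_deriv_nonneg {D : Set ℝ} (hD : Convex ℝ D)
    (haD : IsLeast D a) (hw : ∀ t ∈ D, HasDerivAt w (w' t) t)
    (hw' : ∀ t ∈ D, HasDerivAt w' (w'' t) t) (hq : ∀ t ∈ D, 0 ≤ q t)
    (hqw : ∀ t ∈ D, q t * w t ≤ w'' t) (ha : 0 ≤ w a)
    (hw'_nonneg : ∀ t ∈ interior D, 0 ≤ w' t) :
    ∀ t ∈ D, w a ≤ w t ∧ w' a ≤ w' t := by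
  have hmono : MonotoneOn w D :=
    monotoneOn_of_hasDerivWithinAt_nonneg hD
      (fun t ht => (hw t ht).continuousAt.continuousWithinAt)
      (fun t ht => (hw t (interior_subset ht)).hasDerivWithinAt) hw'_nonneg
  have hmono' : MonotoneOn w' D :=
    monotoneOn_of_hasDerivWithinAt_nonneg hD
      (fun t ht => (hw' t ht).continuousAt.continuousWithinAt)
      (fun t ht => (hw' t (interior_subset ht)).hasDerivWithinAt)
      (fun t ht => by
        have ht := interior_subset ht
        exact (mul_nonneg (hq t ht) (ha.trans (hmono haD.1 ht (haD.2 ht)))).trans (hqw t ht))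
  exact fun t ht => ⟨hmono haD.1 ht (haD.2 ht), hmono' haD.1 ht (haD.2 ht)⟩

variable (hw : ∀ t ≥ a, HasDerivAt w (w' t) t) (hw' : ∀ t ≥ a, HasDerivAt w' (w'' t) t)
  (hq : ∀ t ≥ a, 0 ≤ q t) (hqw : ∀ t ≥ a, q t * w t ≤ w'' t) (ha : 0 ≤ w a) (ha' : 0 < w' a)
include hw hw' hq hqw ha ha'

theorem deriv_pos_of_mul_le_second_deriv : ∀ t ≥ a, 0 < w' t := by
  by_contra! hbad
  set S := Ici a ∩ w' ⁻¹' Iic 0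
  have hS : IsClosed S := ContinuousOn.preimage_isClosed_of_isClosed
    (fun t ht => (hw' t ht).continuousAt.continuousWithinAt) isClosed_Ici isClosed_Iic
  have hSbdd : BddBelow S := ⟨a, fun t ht => ht.1⟩
  have hcS : sInf S ∈ S := hS.csInf_mem hbad hSbdd
  have hac : a < sInf S := lt_of_le_of_ne hcS.1 fun h => (not_le.2 ha') (by rw [h]; exact hcS.2)
  have hpos : ∀ t ∈ interior (Icc a (sInf S)), 0 ≤ w' t := by
    rw [interior_Icc]
    exact fun t ht => le_of_not_ge fun hneg => (csInf_le hSbdd ⟨ht.1.le, hneg⟩).not_gt ht.2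
  have hmono := le_and_deriv_le_of_deriv_nonneg (convex_Icc a _) (isLeast_Icc hac.le)
    (fun t ht => hw t ht.1) (fun t ht => hw' t ht.1) (fun t ht => hq t ht.1)
    (fun t ht => hqw t ht.1) ha hpos
  exact absurd ((hmono _ (right_mem_Icc.2 hac.le)).2.trans hcS.2) (not_le.2 ha')

theorem linear_le_of_mul_le_second_deriv :
    ∀ t ≥ a, w a + w' a * (t - a) ≤ w t ∧ w' a ≤ w' t := by
  have hpos := deriv_pos_of_mul_le_second_deriv hw hw' hq hqw ha ha'
  have hmono := le_and_deriv_le_of_deriv_nonneg (convex_Ici a) isLeast_Ici hw hw' hq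
    hqw ha (fun t ht => (hpos t (interior_subset ht)).le)
  have hlin : MonotoneOn (fun t => w t - w' a * t) (Ici a) :=
    monotoneOn_of_hasDerivWithinAt_nonneg (convex_Ici a)
      (fun t ht => ((hw t ht).sub ((hasDerivAt_id t).const_mul _)).continuousAt.continuousWithinAt)
      (fun t ht => ((hw t (interior_subset ht)).sub
        ((hasDerivAt_id t).const_mul _)).hasDerivWithinAt)
      (fun t ht => by simpa using (hmono t (interior_subset ht)).2)
  intro t ht
  have := hlin isLeast_Ici.1 ht ht
  exact ⟨by linarith, (hmono t ht).2⟩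

end SecondOrderComparison

noncomputable def milnorProfile (ε s : ℝ) : ℝ := s ^ (1 + ε) + 2 * ε * (1 + ε) * s ^ ε

noncomputable def milnorProfileDeriv (ε s : ℝ) : ℝ :=
  (1 + ε) * s ^ ε + 2 * ε * (1 + ε) * (ε * s ^ (ε - 1))

noncomputable def milnorProfileDeriv2 (ε s : ℝ) : ℝ :=
  (1 + ε) * (ε * s ^ (ε - 1)) + 2 * ε * (1 + ε) * (ε * ((ε - 1) * s ^ (ε - 2)))

section Profile

variable {ε s : ℝ}

theorem hasDerivAt_milnorProfile (hs : 0 < s) :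
    HasDerivAt (milnorProfile ε) (milnorProfileDeriv ε s) s := by
  have h := (hasDerivAt_rpow_const (p := 1 + ε) (Or.inl hs.ne')).add
    ((hasDerivAt_rpow_const (p := ε) (Or.inl hs.ne')).const_mul (2 * ε * (1 + ε)))
  rwa [add_sub_cancel_left] at h

theorem hasDerivAt_milnorProfileDeriv (hs : 0 < s) :
    HasDerivAt (milnorProfileDeriv ε) (milnorProfileDeriv2 ε s) s := by
  have h := ((hasDerivAt_rpow_const (p := ε) (Or.inl hs.ne')).const_mul (1 + ε)).add
    (((hasDerivAt_rpow_const (p := ε - 1) (Or.inl hs.ne')).const_mul ε).const_mul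
      (2 * ε * (1 + ε)))
  rwa [sub_sub, one_add_one_eq_two] at h

theorem pow_le_milnorProfile (hε : 0 ≤ ε) (hs : 0 ≤ s) : s ^ (1 + ε) ≤ milnorProfile ε s :=
  le_add_of_nonneg_right (by positivity)

theorem milnorProfile_ode_le (hε : 0 < ε) (hs : 2 * ε * (1 + ε) ≤ s) :
    s * (milnorProfileDeriv ε s + milnorProfileDeriv2 ε s) ≤ (1 + ε) * milnorProfile ε s := by
  have hs0 : 0 < s := lt_of_lt_of_le (by positivity) hs
  set u := s ^ (ε - 2)
  have h1 : s ^ (ε - 1) = u * s := by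
    rw [show ε - 1 = ε - 2 + 1 by ring, rpow_add_one hs0.ne']
  have h2 : s ^ ε = u * s * s := by
    rw [← h1, ← rpow_add_one hs0.ne', sub_add_cancel]
  have h3 : s ^ (1 + ε) = u * s * s * s := by
    rw [← h2, ← rpow_add_one hs0.ne', add_comm]
  have hdefect :
      (1 + ε) * milnorProfile ε s - s * (milnorProfileDeriv ε s + milnorProfileDeriv2 ε s) =
        ε * (1 + ε) * (u * s) * (s - 2 * ε * (ε - 1)) := by
    simp only [milnorProfile, milnorProfileDeriv, milnorProfileDeriv2, h1, h2, h3]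
    ring
  have hu : 0 < u := rpow_pos_of_pos hs0 _
  have : 0 ≤ ε * (1 + ε) * (u * s) * (s - 2 * ε * (ε - 1)) :=
    mul_nonneg (by positivity) (by linarith)
  linarith

end Profile

theorem hasDerivAt_comp_log {φ : ℝ → ℝ} {φ' r : ℝ} (hr : r ≠ 0) (hφ : HasDerivAt φ φ' (log r)) :
    HasDerivAt (fun x => φ (log x)) (φ' / r) r := by
  rw [div_eq_mul_inv]
  exact hφ.comp r (hasDerivAt_log hr)

theorem hasDerivAt_mul_comp_log {φ : ℝ → ℝ} {φ' r : ℝ} (hr : r ≠ 0)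
    (hφ : HasDerivAt φ φ' (log r)) :
    HasDerivAt (fun x => x * φ (log x)) (φ (log r) + φ') r := by
  have h := (hasDerivAt_id' r).mul (hasDerivAt_comp_log hr hφ)
  rwa [one_mul, mul_div_cancel₀ _ hr] at h

noncomputable def milnorSubsolution (ε r : ℝ) : ℝ := r * milnorProfile ε (log r)

noncomputable def milnorSubsolutionDeriv (ε r : ℝ) : ℝ :=
  milnorProfile ε (log r) + milnorProfileDeriv ε (log r)

noncomputable def milnorSubsolutionDeriv2 (ε r : ℝ) : ℝ :=
  (milnorProfileDeriv ε (log r) + milnorProfileDeriv2 ε (log r)) / r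

section Subsolution

variable {ε r : ℝ}

theorem hasDerivAt_milnorSubsolution (hr : 1 < r) :
    HasDerivAt (milnorSubsolution ε) (milnorSubsolutionDeriv ε r) r :=
  hasDerivAt_mul_comp_log (by positivity) (hasDerivAt_milnorProfile (log_pos hr))

theorem hasDerivAt_milnorSubsolutionDeriv (hr : 1 < r) :
    HasDerivAt (milnorSubsolutionDeriv ε) (milnorSubsolutionDeriv2 ε r) r :=
  hasDerivAt_comp_log (by positivity)
    ((hasDerivAt_milnorProfile (log_pos hr)).add (hasDerivAt_milnorProfileDeriv (log_pos hr)))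

theorem mul_log_rpow_le_milnorSubsolution (hε : 0 ≤ ε) (hr : 1 ≤ r) :
    r * log r ^ (1 + ε) ≤ milnorSubsolution ε r :=
  mul_le_mul_of_nonneg_left (pow_le_milnorProfile hε (log_nonneg hr)) (by positivity)

theorem milnorSubsolution_nonneg (hε : 0 ≤ ε) (hr : 1 ≤ r) : 0 ≤ milnorSubsolution ε r :=
  (mul_nonneg (by linarith) (rpow_nonneg (log_nonneg hr) _)).trans
    (mul_log_rpow_le_milnorSubsolution hε hr)

theorem milnorSubsolutionDeriv2_le {k : ℝ} (hε : 0 < ε) (hr : 1 < r)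
    (hlog : 2 * ε * (1 + ε) ≤ log r) (hk : (1 + ε) / (r ^ 2 * log r) ≤ k) :
    milnorSubsolutionDeriv2 ε r ≤ k * milnorSubsolution ε r := by
  have hr0 : 0 < r := by linarith
  have hL : 0 < log r := log_pos hr
  have hode := milnorProfile_ode_le hε hlog
  have hsub : milnorSubsolutionDeriv2 ε r ≤ (1 + ε) / (r ^ 2 * log r) * milnorSubsolution ε r := by
    rw [milnorSubsolutionDeriv2, milnorSubsolution, div_le_iff₀ hr0,
      show (1 + ε) / (r ^ 2 * log r) * (r * milnorProfile ε (log r)) * r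
        = (1 + ε) * milnorProfile ε (log r) / log r by field_simp, le_div_iff₀ hL]
    linarith
  exact hsub.trans (mul_le_mul_of_nonneg_right hk (milnorSubsolution_nonneg hε.le hr.le))

end Subsolution

theorem le_of_subsolution_of_supersolution {k f f' f'' g g' g'' : ℝ → ℝ} {a : ℝ}
    (hf : ∀ t ≥ a, HasDerivAt f (f' t) t) (hf' : ∀ t ≥ a, HasDerivAt f' (f'' t) t)
    (hg : ∀ t ≥ a, HasDerivAt g (g' t) t) (hg' : ∀ t ≥ a, HasDerivAt g' (g'' t) t)
    (hk : ∀ t ≥ a, 0 ≤ k t) (hkf : ∀ t ≥ a, k t * f t ≤ f'' t) (hkg : ∀ t ≥ a, g'' t ≤ k t * g t)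
    (ha : g a ≤ f a) (ha' : g' a < f' a) : ∀ t ≥ a, g t ≤ f t := by
  intro t ht
  have h := linear_le_of_mul_le_second_deriv (w := f - g) (w' := f' - g') (w'' := f'' - g'')
    (fun t ht => (hf t ht).sub (hg t ht)) (fun t ht => (hf' t ht).sub (hg' t ht)) hk
    (fun t ht => by simp only [Pi.sub_apply]; linarith [hkf t ht, hkg t ht])
    (sub_nonneg.2 ha) (sub_pos.2 ha') t ht
  simp only [Pi.sub_apply] at h
  nlinarith [h.1, mul_nonneg (sub_pos.2 ha').le (sub_nonneg.2 ht)]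

theorem self_le_and_one_le_deriv_of_jacobi {k f : ℝ → ℝ} (hk : ∀ r ≥ 0, 0 ≤ k r)
    (hf : ContDiff ℝ 2 f) (hode : ∀ r ≥ 0, deriv (deriv f) r = k r * f r) (hf0 : f 0 = 0)
    (hf1 : deriv f 0 = 1) : ∀ r ≥ 0, r ≤ f r ∧ 1 ≤ deriv f r := by
  intro r hr
  have h := linear_le_of_mul_le_second_deriv
    (fun t _ => (hf.differentiable two_ne_zero t).hasDerivAt)
    (fun t _ => (hf.differentiable_deriv_two t).hasDerivAt) hk (fun t ht => (hode t ht).ge)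
    hf0.ge (hf1 ▸ one_pos) r hr
  rw [hf0, hf1] at h
  exact ⟨by linarith [h.1], h.2⟩

theorem exists_pos_mul_lt_and_mul_lt {a b : ℝ} (ha : 0 < a) (hb : 0 < b) (x y : ℝ) :
    ∃ c > 0, c * x < a ∧ c * y < b := by
  have hx : ∀ᶠ c in 𝓝 (0 : ℝ), c * x < a :=
    (continuous_mul_const x).continuousAt.eventually_lt continuousAt_const (by simpa using ha)
  have hy : ∀ᶠ c in 𝓝 (0 : ℝ), c * y < b :=
    (continuous_mul_const y).continuousAt.eventually_lt continuousAt_const (by simpa using hb)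
  exact (eventually_mem_nhdsWithin.and (nhdsWithin_le_nhds (hx.and hy))).exists (f := 𝓝[>] 0)

theorem mul_milnorSubsolution_le_of_jacobi {ε a c : ℝ} {k f : ℝ → ℝ} (hε : 0 < ε) (ha : 1 < a)
    (hlog : 2 * ε * (1 + ε) ≤ log a) (hc : 0 ≤ c) (hk : ∀ r ≥ 0, 0 ≤ k r)
    (hkG : ∀ r ≥ a, (1 + ε) / (r ^ 2 * log r) ≤ k r) (hf : ContDiff ℝ 2 f)
    (hode : ∀ r ≥ 0, deriv (deriv f) r = k r * f r) (hfa : c * milnorSubsolution ε a ≤ f a)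
    (hfa' : c * milnorSubsolutionDeriv ε a < deriv f a) :
    ∀ r ≥ a, c * milnorSubsolution ε r ≤ f r :=
  le_of_subsolution_of_supersolution
    (fun t _ => (hf.differentiable two_ne_zero t).hasDerivAt)
    (fun t _ => (hf.differentiable_deriv_two t).hasDerivAt)
    (fun t ht => (hasDerivAt_milnorSubsolution (ha.trans_le ht)).const_mul c)
    (fun t ht => (hasDerivAt_milnorSubsolutionDeriv (ha.trans_le ht)).const_mul c)
    (fun t ht => hk t (by linarith)) (fun t ht => (hode t (by linarith)).ge)
    (fun t ht => by
      rw [mul_left_comm]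
      exact mul_le_mul_of_nonneg_left (milnorSubsolutionDeriv2_le hε (ha.trans_le ht)
        (hlog.trans (log_le_log (by linarith) ht)) (hkG t ht)) hc)
    hfa hfa'

theorem stmt_5_general (ε R : ℝ) (hε : 0 < ε) :
    ∃ A > (1 : ℝ), ∃ C > (0 : ℝ),
      ∀ k : ℝ → ℝ, Continuous k → (∀ r ≥ 0, 0 ≤ k r) →
        (∀ r > R, (1 + ε) / (r ^ 2 * Real.log r) ≤ k r) →
        ∀ f : ℝ → ℝ, ContDiff ℝ 2 f →
          (∀ r ≥ 0, deriv (deriv f) r = k r * f r) →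
          f 0 = 0 → deriv f 0 = 1 →
          ∀ r ≥ A, r * Real.log r ^ (1 + ε) / C ≤ f r := by
  set A := max R (exp (2 * ε * (1 + ε))) + 1
  have hRA : R < A := by linarith [le_max_left R (exp (2 * ε * (1 + ε)))]
  have hexpA : exp (2 * ε * (1 + ε)) < A := by linarith [le_max_right R (exp (2 * ε * (1 + ε)))]
  have hA : 1 < A := lt_trans (one_lt_exp_iff.2 (by positivity)) hexpA
  have hlogA : 2 * ε * (1 + ε) ≤ log A := ((lt_log_iff_exp_lt (by linarith)).2 hexpA).le
  obtain ⟨c, hc, hcA, hcA'⟩ := exists_pos_mul_lt_and_mul_lt (by linarith : (0 : ℝ) < A) one_pos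
    (milnorSubsolution ε A) (milnorSubsolutionDeriv ε A)
  refine ⟨A, hA, c⁻¹, inv_pos.2 hc, fun k _ hk hkR f hf hode hf0 hf1 r hr => ?_⟩
  have hfA := self_le_and_one_le_deriv_of_jacobi hk hf hode hf0 hf1 A (by linarith)
  have hfG := mul_milnorSubsolution_le_of_jacobi hε hA hlogA hc.le hk
    (fun t ht => hkR t (hRA.trans_le ht)) hf hode (by linarith [hfA.1]) (by linarith [hfA.2])
  calc r * log r ^ (1 + ε) / c⁻¹ = c * (r * log r ^ (1 + ε)) := by rw [div_inv_eq_mul, mul_comm]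
    _ ≤ c * milnorSubsolution ε r := by
      gcongr
      exact mul_log_rpow_le_milnorSubsolution hε.le (by linarith)
    _ ≤ f r := hfG r hr

/-- Milnor-type lower growth bound: for every ε > 0 and R > 1 there are A > 1 and C > 0,
depending only on ε and R, such that every Jacobi field with potential
k(r) ≥ (1+ε)/(r² log r) for r > R satisfies f(r) ≥ r (log r)^{1+ε}/C for r ≥ A. -/
theorem stmt_5 (ε R : ℝ) (hε : 0 < ε) (hR : 1 < R) :
    ∃ A > (1 : ℝ), ∃ C > (0 : ℝ),
      ∀ k : ℝ → ℝ, Continuous k → (∀ r ≥ 0, 0 ≤ k r) →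
        (∀ r > R, (1 + ε) / (r ^ 2 * Real.log r) ≤ k r) →
        ∀ f : ℝ → ℝ, ContDiff ℝ 2 f →
          (∀ r ≥ 0, deriv (deriv f) r = k r * f r) →
          f 0 = 0 → deriv f 0 = 1 →
          ∀ r ≥ A, r * Real.log r ^ (1 + ε) / C ≤ f r :=
  stmt_5_general ε R hε
end

section
/- Let ε > 0 and R > 1. Let k : ℝ → ℝ be continuous with k ≥ 0 on [0,∞) and k(r) ≥ (1+ε)/(r² log r) for all r > R, and let f : ℝ → ℝ be twice continuously differentiable with f''(r) = k(r) f(r) for r ≥ 0, f(0) = 0 and f'(0) = 1. Then the improper integral ∫_1^∞ 1/f(r) dr is finite. -/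
open Real MeasureTheory Set

/-!
Since `k ≥ 0`, the Jacobi field `f` is positive and convex on `(0, ∞)`, so `f r ≤ r f' r`.
For `a = 1 + ε/2` and `c` large, `g x = (x + c) (log x)^a` satisfies
`g'' ≤ (1 + ε) / (x² log x) · g ≤ k g` on `[c, ∞)`. The Wronskian `f' g - f g'` is then
nondecreasing on `[c, ∞)` and nonnegative at `c`, so `f / g` is nondecreasing and
`f x ≥ C x (log x)^a`, whose reciprocal is integrable at infinity because `a > 1`.
-/

structure IsJacobiField (k f : ℝ → ℝ) : Prop where
  differentiable : Differentiable ℝ f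
  differentiable_deriv : Differentiable ℝ (deriv f)
  deriv_deriv : ∀ r ≥ 0, deriv (deriv f) r = k r * f r
  apply_zero : f 0 = 0
  deriv_zero : deriv f 0 = 1

namespace IsJacobiField

variable {k f : ℝ → ℝ}

theorem monotoneOn_deriv (hJ : IsJacobiField k f) (hk : ∀ r ≥ 0, 0 ≤ k r) {s : Set ℝ}
    (hs : Convex ℝ s) (hs0 : s ⊆ Ici 0) (hfs : ∀ r ∈ s, 0 ≤ f r) :
    MonotoneOn (deriv f) s := by
  refine monotoneOn_of_deriv_nonneg hs hJ.differentiable_deriv.continuous.continuousOn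
    hJ.differentiable_deriv.differentiableOn fun r hr => ?_
  have hr := interior_subset hr
  rw [hJ.deriv_deriv r (hs0 hr)]
  exact mul_nonneg (hk r (hs0 hr)) (hfs r hr)

/-- At the first zero `z` of `f'`, `f` would be nonnegative on `[0, z]`, hence convex there, so
`f' z ≥ f' 0 = 1`. -/
theorem deriv_pos (hJ : IsJacobiField k f) (hk : ∀ r ≥ 0, 0 ≤ k r) {r : ℝ} (hr : 0 ≤ r) :
    0 < deriv f r := by
  by_contra! hneg
  set Z := Ici 0 ∩ {t | deriv f t ≤ 0}
  have hZ : IsClosed Z :=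
    isClosed_Ici.inter (isClosed_le hJ.differentiable_deriv.continuous continuous_const)
  have hbdd : BddBelow Z := ⟨0, fun t ht => ht.1⟩
  have hzZ : sInf Z ∈ Z := hZ.csInf_mem ⟨r, hr, hneg⟩ hbdd
  set z := sInf Z
  have hpos : ∀ t ∈ Ico 0 z, 0 < deriv f t := fun t ht => by
    by_contra! h
    exact (csInf_le hbdd ⟨ht.1, h⟩).not_gt ht.2
  have hfmono : MonotoneOn f (Icc 0 z) :=
    monotoneOn_of_deriv_nonneg (convex_Icc 0 z) hJ.differentiable.continuous.continuousOn
      hJ.differentiable.differentiableOn fun t ht => by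
        rw [interior_Icc] at ht
        exact (hpos t ⟨ht.1.le, ht.2⟩).le
  have hfnn : ∀ t ∈ Icc 0 z, 0 ≤ f t := fun t ht =>
    hJ.apply_zero ▸ hfmono ⟨le_rfl, hzZ.1⟩ ht ht.1
  have := hJ.monotoneOn_deriv hk (convex_Icc 0 z) Icc_subset_Ici_self hfnn
    ⟨le_rfl, hzZ.1⟩ ⟨hzZ.1, le_rfl⟩ hzZ.1
  linarith [hJ.deriv_zero, hzZ.2.out]

theorem strictMonoOn (hJ : IsJacobiField k f) (hk : ∀ r ≥ 0, 0 ≤ k r) :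
    StrictMonoOn f (Ici 0) :=
  strictMonoOn_of_deriv_pos (convex_Ici 0) hJ.differentiable.continuous.continuousOn
    fun _ ht => hJ.deriv_pos hk (interior_subset ht)

theorem pos (hJ : IsJacobiField k f) (hk : ∀ r ≥ 0, 0 ≤ k r) {r : ℝ} (hr : 0 < r) :
    0 < f r :=
  hJ.apply_zero ▸ hJ.strictMonoOn hk (mem_Ici.2 le_rfl) (mem_Ici.2 hr.le) hr

theorem le_mul_deriv (hJ : IsJacobiField k f) (hk : ∀ r ≥ 0, 0 ≤ k r) {r : ℝ} (hr : 0 < r) :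
    f r ≤ r * deriv f r := by
  obtain ⟨c, hc, hslope⟩ := exists_deriv_eq_slope f hr hJ.differentiable.continuous.continuousOn
    hJ.differentiable.differentiableOn
  have hmono := hJ.monotoneOn_deriv hk (convex_Ici 0) subset_rfl fun t ht =>
    hJ.apply_zero ▸ (hJ.strictMonoOn hk).monotoneOn (mem_Ici.2 le_rfl) ht ht
  have := hmono hc.1.le hr.le hc.2.le
  rw [hslope, hJ.apply_zero, sub_zero, sub_zero, div_le_iff₀ hr] at this
  linarith

end IsJacobiField

section Wronskian

variable {f f' f'' g g' g'' k : ℝ → ℝ} {s : Set ℝ}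

theorem monotoneOn_wronskian (hs : Convex ℝ s)
    (hf : ∀ x ∈ s, HasDerivAt f (f' x) x) (hf' : ∀ x ∈ s, HasDerivAt f' (f'' x) x)
    (hg : ∀ x ∈ s, HasDerivAt g (g' x) x) (hg' : ∀ x ∈ s, HasDerivAt g' (g'' x) x)
    (hf'' : ∀ x ∈ s, k x * f x ≤ f'' x) (hg'' : ∀ x ∈ s, g'' x ≤ k x * g x)
    (hf0 : ∀ x ∈ s, 0 ≤ f x) (hg0 : ∀ x ∈ s, 0 ≤ g x) :
    MonotoneOn (fun x => f' x * g x - f x * g' x) s := by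
  have hW : ∀ x ∈ s, HasDerivAt (fun x => f' x * g x - f x * g' x)
      (f'' x * g x - f x * g'' x) x := fun x hx =>
    (((hf' x hx).mul (hg x hx)).sub ((hf x hx).mul (hg' x hx))).congr_deriv (by ring)
  refine monotoneOn_of_hasDerivWithinAt_nonneg hs
    (fun x hx => (hW x hx).continuousAt.continuousWithinAt)
    (fun x hx => (hW x (interior_subset hx)).hasDerivWithinAt) fun x hx => ?_
  replace hx := interior_subset hx
  nlinarith [mul_le_mul_of_nonneg_right (hf'' x hx) (hg0 x hx),
    mul_le_mul_of_nonneg_left (hg'' x hx) (hf0 x hx)]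

theorem monotoneOn_div_of_wronskian_nonneg (hs : Convex ℝ s)
    (hf : ∀ x ∈ s, HasDerivAt f (f' x) x) (hg : ∀ x ∈ s, HasDerivAt g (g' x) x)
    (hg0 : ∀ x ∈ s, 0 < g x) (hW : ∀ x ∈ s, 0 ≤ f' x * g x - f x * g' x) :
    MonotoneOn (fun x => f x / g x) s := by
  have hq : ∀ x ∈ s, HasDerivAt (fun x => f x / g x)
      ((f' x * g x - f x * g' x) / g x ^ 2) x := fun x hx =>
    (hf x hx).div (hg x hx) (hg0 x hx).ne'
  exact monotoneOn_of_hasDerivWithinAt_nonneg hs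
    (fun x hx => (hq x hx).continuousAt.continuousWithinAt)
    (fun x hx => (hq x (interior_subset hx)).hasDerivWithinAt)
    fun x hx => div_nonneg (hW x (interior_subset hx)) (sq_nonneg _)

theorem monotoneOn_div_of_wronskian_nonneg_left {a : ℝ}
    (hf : ∀ x ∈ Ici a, HasDerivAt f (f' x) x) (hf' : ∀ x ∈ Ici a, HasDerivAt f' (f'' x) x)
    (hg : ∀ x ∈ Ici a, HasDerivAt g (g' x) x) (hg' : ∀ x ∈ Ici a, HasDerivAt g' (g'' x) x)
    (hf'' : ∀ x ∈ Ici a, k x * f x ≤ f'' x) (hg'' : ∀ x ∈ Ici a, g'' x ≤ k x * g x)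
    (hf0 : ∀ x ∈ Ici a, 0 ≤ f x) (hg0 : ∀ x ∈ Ici a, 0 < g x)
    (hWa : 0 ≤ f' a * g a - f a * g' a) :
    MonotoneOn (fun x => f x / g x) (Ici a) :=
  have hW := monotoneOn_wronskian (convex_Ici a) hf hf' hg hg' hf'' hg'' hf0 fun x hx =>
    (hg0 x hx).le
  monotoneOn_div_of_wronskian_nonneg (convex_Ici a) hf hg hg0 fun _ hx =>
    hWa.trans (hW (mem_Ici.2 le_rfl) hx hx)

end Wronskian

section LogPower

variable {a b c x : ℝ}

theorem hasDerivAt_add_mul_log_rpow (hx : 1 < x) :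
    HasDerivAt (fun x => (x + c) * log x ^ a)
      (log x ^ a + a * (x + c) * log x ^ (a - 1) / x) x := by
  have hL := (hasDerivAt_log (by linarith : x ≠ 0)).rpow_const (p := a) (Or.inl (log_pos hx).ne')
  refine (((hasDerivAt_id' x).add_const c).mul hL).congr_deriv ?_
  field_simp

theorem hasDerivAt_log_rpow_add_mul_log_rpow_div (hx : 1 < x) :
    HasDerivAt (fun x => log x ^ a + a * (x + c) * log x ^ (a - 1) / x)
      (a * log x ^ (a - 2) * (log x * (x - c) + (a - 1) * (x + c)) / x ^ 2) x := by
  have hx0 : x ≠ 0 := by linarith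
  have hlog := log_pos hx
  have hL := (hasDerivAt_log hx0).rpow_const (p := a) (Or.inl hlog.ne')
  have hL' := (hasDerivAt_log hx0).rpow_const (p := a - 1) (Or.inl hlog.ne')
  refine (hL.add ((((hasDerivAt_id' x).add_const c).const_mul a |>.mul hL').div
    (hasDerivAt_id' x) hx0)).congr_deriv ?_
  have e2 : log x ^ (a - 1) = log x ^ (a - 2) * log x := by
    rw [← rpow_add_one hlog.ne']; ring_nf
  simp only [Pi.mul_apply]
  rw [show a - 1 - 1 = a - 2 by ring, e2]
  field_simp
  ring

theorem log_rpow_deriv2_le (ha : 0 ≤ a) (hc : 0 ≤ c) (hx : 1 < x)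
    (hL : a * (a - 1) ≤ (b - a) * log x) :
    a * log x ^ (a - 2) * (log x * (x - c) + (a - 1) * (x + c)) / x ^ 2 ≤
      b / (x ^ 2 * log x) * ((x + c) * log x ^ a) := by
  have hlog := log_pos hx
  have e1 : log x ^ a = log x ^ (a - 2) * log x ^ 2 := by
    rw [← rpow_natCast, ← rpow_add hlog]; norm_num
  rw [e1, show b / (x ^ 2 * log x) * ((x + c) * (log x ^ (a - 2) * log x ^ 2)) =
    log x ^ (a - 2) * (b * log x * (x + c)) / x ^ 2 by field_simp, mul_assoc]
  gcongr ?_ / _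
  have hP := rpow_pos_of_pos hlog (a - 2)
  have hQ : a * (log x * (x - c) + (a - 1) * (x + c)) ≤ b * log x * (x + c) := by
    nlinarith [mul_le_mul_of_nonneg_right hL (by linarith : 0 ≤ x + c),
      mul_nonneg (mul_nonneg ha hlog.le) hc]
  nlinarith [mul_le_mul_of_nonneg_left hQ hP.le]

theorem mul_deriv_le_add_mul_log_rpow (hc : 1 < c) (h : 2 * a ≤ log c) :
    c * (log c ^ a + a * (c + c) * log c ^ (a - 1) / c) ≤ (c + c) * log c ^ a := by
  have hlog := log_pos (x := c) hc
  have e2 : log c ^ a = log c ^ (a - 1) * log c := by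
    rw [← rpow_add_one hlog.ne']; norm_num
  have hP := rpow_pos_of_pos hlog (a - 1)
  rw [e2]
  field_simp
  nlinarith [mul_le_mul_of_nonneg_left h hP.le]

theorem integrableOn_Ioi_inv_mul_log_rpow_neg (ha : 1 < a) (hc : 1 < c) :
    IntegrableOn (fun x => x⁻¹ * log x ^ (-a)) (Ioi c) := by
  have := (integrableOn_comp_log_Ioi (fun y => y ^ (-a)) (by linarith : (0:ℝ) < c)).2
    (integrableOn_Ioi_rpow_of_lt (by linarith) (log_pos hc))
  simpa using this

end LogPower

theorem integrableOn_Ioi_one_div_of_mul_log_rpow_le {f : ℝ → ℝ} {a b C : ℝ} (ha : 1 < a)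
    (hb : 1 < b) (hC : 0 < C) (hf : ContinuousOn f (Ioi b))
    (hle : ∀ x ∈ Ioi b, C * (x * log x ^ a) ≤ f x) :
    IntegrableOn (fun x => 1 / f x) (Ioi b) := by
  have hpos : ∀ x ∈ Ioi b, 0 < C * (x * log x ^ a) := fun x hx => by
    have : 1 < x := hb.trans hx
    have := log_pos this
    positivity
  have hcont : ContinuousOn (fun x => 1 / f x) (Ioi b) :=
    continuousOn_const.div hf fun x hx => ((hpos x hx).trans_le (hle x hx)).ne'
  refine ((integrableOn_Ioi_inv_mul_log_rpow_neg ha hb).const_mul C⁻¹).mono'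
    (hcont.aestronglyMeasurable measurableSet_Ioi) ?_
  rw [ae_restrict_iff' measurableSet_Ioi]
  refine Filter.Eventually.of_forall fun x hx => ?_
  have hlog := log_pos (hb.trans hx)
  rw [norm_of_nonneg (one_div_nonneg.2 ((hpos x hx).trans_le (hle x hx)).le),
    rpow_neg hlog.le]
  calc 1 / f x ≤ 1 / (C * (x * log x ^ a)) := one_div_le_one_div_of_le (hpos x hx) (hle x hx)
    _ = C⁻¹ * (x⁻¹ * (log x ^ a)⁻¹) := by field_simp

namespace IsJacobiField

variable {k f : ℝ → ℝ} {a c : ℝ}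

/-- The shift by `c` gives `c g'(c) ≤ g(c)` for `g x = (x + c) (log x)^a`, which together with
`f(c) ≤ c f'(c)` makes the Wronskian of `f` and `g` nonnegative at `c`. -/
theorem monotoneOn_div_add_mul_log_rpow (hJ : IsJacobiField k f) (hk0 : ∀ r ≥ 0, 0 ≤ k r)
    (ha : 1 ≤ a) (hc : 1 < c) (hac : 2 * a ≤ log c)
    (hk : ∀ x ∈ Ici c, (2 * a - 1) / (x ^ 2 * log x) ≤ k x) :
    MonotoneOn (fun x => f x / ((x + c) * log x ^ a)) (Ici c) := by
  have hx1 : ∀ x ∈ Ici c, 1 < x := fun x hx => hc.trans_le hx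
  refine monotoneOn_div_of_wronskian_nonneg_left (k := k)
    (fun x _ => (hJ.differentiable x).hasDerivAt)
    (fun x _ => (hJ.differentiable_deriv x).hasDerivAt)
    (fun x hx => hasDerivAt_add_mul_log_rpow (hx1 x hx))
    (fun x hx => hasDerivAt_log_rpow_add_mul_log_rpow_div (hx1 x hx))
    (fun x hx => (hJ.deriv_deriv x (by linarith [hx1 x hx])).ge) (fun x hx => ?_)
    (fun x hx => (hJ.pos hk0 (by linarith [hx1 x hx])).le)
    (fun x hx => by have := log_pos (hx1 x hx); have := hx1 x hx; positivity) ?_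
  · refine (log_rpow_deriv2_le (b := 2 * a - 1) (by linarith) (by linarith) (hx1 x hx)
      (by nlinarith [log_le_log (by linarith) hx])).trans ?_
    have := log_pos (hx1 x hx)
    have := hx1 x hx
    exact mul_le_mul_of_nonneg_right (hk x hx) (by positivity)
  · have hfc := hJ.le_mul_deriv hk0 (by linarith : 0 < c)
    have hf'c := hJ.deriv_pos hk0 (by linarith : 0 ≤ c)
    have hgc := mul_deriv_le_add_mul_log_rpow hc hac
    have := log_pos hc
    have hg'c : 0 ≤ log c ^ a + a * (c + c) * log c ^ (a - 1) / c := by positivity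
    nlinarith [mul_le_mul_of_nonneg_right hfc hg'c, mul_le_mul_of_nonneg_left hgc hf'c.le]

theorem integrableOn_Ioi_one_div (hJ : IsJacobiField k f) (hk0 : ∀ r ≥ 0, 0 ≤ k r)
    (ha : 1 < a) (hc : 1 < c) (hac : 2 * a ≤ log c)
    (hk : ∀ x ∈ Ici c, (2 * a - 1) / (x ^ 2 * log x) ≤ k x) :
    IntegrableOn (fun x => 1 / f x) (Ioi 1) := by
  have hmono := hJ.monotoneOn_div_add_mul_log_rpow hk0 ha.le hc hac hk
  have hlogc := log_pos hc
  have hC : 0 < f c / ((c + c) * log c ^ a) := div_pos (hJ.pos hk0 (by linarith)) (by positivity)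
  have hfar : IntegrableOn (fun x => 1 / f x) (Ioi c) :=
    integrableOn_Ioi_one_div_of_mul_log_rpow_le ha hc hC hJ.differentiable.continuous.continuousOn
      fun x hx => by
        have hlog := log_pos (hc.trans hx)
        have hg : 0 < (x + c) * log x ^ a := by have := hc.trans hx; positivity
        have := hmono (mem_Ici.2 le_rfl) (mem_Ici.2 hx.le) hx.le
        rw [le_div_iff₀ hg] at this
        refine le_trans ?_ this
        gcongr
        linarith
  have hnear : IntegrableOn (fun x => 1 / f x) (Ioc 1 c) :=
    ((continuousOn_const.div hJ.differentiable.continuous.continuousOn fun x hx =>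
      (hJ.pos hk0 (by linarith [hx.1])).ne').integrableOn_Icc).mono_set Ioc_subset_Icc_self
  simpa only [Ioc_union_Ioi_eq_Ioi hc.le] using hnear.union hfar

end IsJacobiField

theorem stmt_6_general (ε R : ℝ) (hε : 0 < ε) (k f : ℝ → ℝ)
    (hk0 : ∀ r ≥ 0, 0 ≤ k r)
    (hklow : ∀ r > R, (1 + ε) / (r ^ 2 * Real.log r) ≤ k r)
    (hf : ContDiff ℝ 2 f)
    (hf'' : ∀ r ≥ 0, deriv (deriv f) r = k r * f r)
    (hf0 : f 0 = 0) (hf'0 : deriv f 0 = 1) :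
    IntegrableOn (fun r => 1 / f r) (Set.Ioi (1 : ℝ)) volume := by
  have hJ : IsJacobiField k f :=
    ⟨hf.differentiable two_ne_zero, hf.differentiable_deriv_two, hf'', hf0, hf'0⟩
  have hc : 1 < max (R + 1) (exp (2 * (1 + ε / 2))) :=
    (one_lt_exp_iff.2 (by positivity)).trans_le (le_max_right _ _)
  refine hJ.integrableOn_Ioi_one_div (a := 1 + ε / 2) hk0 (by linarith) hc
    ((le_log_iff_exp_le (by linarith)).2 (le_max_right _ _)) fun x hx => ?_
  rw [show 2 * (1 + ε / 2) - 1 = 1 + ε by ring]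
  exact hklow x ((lt_add_one R).trans_le ((le_max_left _ _).trans hx))

/-- Transience criterion: if k(r) ≥ (1+ε)/(r² log r) for r > R, then the Jacobi field f
with potential k satisfies ∫_1^∞ dr/f(r) < ∞. -/
theorem stmt_6 (ε R : ℝ) (hε : 0 < ε) (hR : 1 < R) (k f : ℝ → ℝ)
    (hk : Continuous k) (hk0 : ∀ r ≥ 0, 0 ≤ k r)
    (hklow : ∀ r > R, (1 + ε) / (r ^ 2 * Real.log r) ≤ k r)
    (hf : ContDiff ℝ 2 f)
    (hf'' : ∀ r ≥ 0, deriv (deriv f) r = k r * f r)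
    (hf0 : f 0 = 0) (hf'0 : deriv f 0 = 1) :
    IntegrableOn (fun r => 1 / f r) (Set.Ioi (1 : ℝ)) volume :=
  stmt_6_general ε R hε k f hk0 hklow hf hf'' hf0 hf'0
end

section
/- Let R > 1 and Λ ≥ 0. Let k : ℝ → ℝ be continuous with 0 ≤ k(r) ≤ Λ for r ∈ [0,R] and 0 ≤ k(r) ≤ 1/(r² log r) for all r > R, and let f : ℝ → ℝ be twice continuously differentiable with f''(r) = k(r) f(r) for r ≥ 0, f(0) = 0 and f'(0) = 1. Then there exists a constant C > 0 such that f(r) ≤ C r log r for all r ≥ max(R, e). -/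
open Real Set Filter Topology

/-!
A Jacobi field with nonnegative potential stays nonnegative: it leaves 0 increasing, and it is
convex wherever it is nonnegative. Against the model solution `g r = r log r`, which satisfies
`g'' = 1/r ≥ k g` beyond `max R e`, the Wronskian `f' g - f g'` is therefore nonincreasing, hence
bounded above by some `B`. Then `(f/g)' ≤ B/g² ≤ B/r²`, so `f/g` stays bounded.
-/

theorem antitoneOn_Ici_of_hasDerivAt {φ φ' : ℝ → ℝ} {a : ℝ}
    (hφ : ∀ x ≥ a, HasDerivAt φ (φ' x) x) (hφ' : ∀ x > a, φ' x ≤ 0) :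
    AntitoneOn φ (Ici a) :=
  antitoneOn_of_hasDerivWithinAt_nonpos (convex_Ici a)
    (fun x hx => (hφ x hx).continuousAt.continuousWithinAt)
    (fun x hx => by rw [interior_Ici] at hx; exact (hφ x hx.le).hasDerivWithinAt)
    (fun x hx => by rw [interior_Ici] at hx; exact hφ' x hx)

/-- Real induction on the closed invariant `0 ≤ f ∧ f'(a) ≤ f'`: at a point where it holds,
`f' > 0` makes `f` increase, hence stay nonnegative, hence `f'` increase, just to the right. -/
theorem nonneg_of_deriv_pos_of_deriv_deriv_nonneg {f : ℝ → ℝ} {a : ℝ}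
    (hf : Differentiable ℝ f) (hf' : Differentiable ℝ (deriv f))
    (ha : 0 ≤ f a) (ha' : 0 < deriv f a)
    (hconvex : ∀ x ≥ a, 0 ≤ f x → 0 ≤ deriv (deriv f) x) :
    ∀ x ≥ a, 0 ≤ f x := by
  set s := {x | 0 ≤ f x ∧ deriv f a ≤ deriv f x}
  have hs : IsClosed s :=
    (isClosed_le continuous_const hf.continuous).inter
      (isClosed_le continuous_const hf'.continuous)
  suffices ∀ b, Icc a b ⊆ s from fun x hx => (this x ⟨hx, le_rfl⟩).1
  refine fun b => (hs.inter isClosed_Icc).Icc_subset_of_forall_mem_nhdsWithin ⟨ha, le_rfl⟩ ?_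
  rintro x ⟨⟨hfx, hf'x⟩, hxa, -⟩
  have hpos : ∀ᶠ y in 𝓝[≥] x, 0 < deriv f y :=
    nhdsWithin_le_nhds <| continuousAt_const.eventually_lt hf'.continuous.continuousAt
      (ha'.trans_le hf'x)
  obtain ⟨c, hxc, hc⟩ := mem_nhdsGE_iff_exists_Icc_subset.mp hpos
  have hf_mono : MonotoneOn f (Icc x c) :=
    monotoneOn_of_deriv_nonneg (convex_Icc x c) hf.continuous.continuousOn
      hf.differentiableOn fun y hy => (hc (interior_subset hy)).le
  have hfc : ∀ y ∈ Icc x c, 0 ≤ f y := fun y hy =>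
    hfx.trans (hf_mono (left_mem_Icc.mpr hxc.le) hy hy.1)
  have hf'_mono : MonotoneOn (deriv f) (Icc x c) :=
    monotoneOn_of_deriv_nonneg (convex_Icc x c) hf'.continuous.continuousOn
      hf'.differentiableOn fun y hy =>
        hconvex y (hxa.trans (interior_subset hy).1) (hfc y (interior_subset hy))
  refine mem_of_superset (Ioo_mem_nhdsGT hxc) fun y hy => ?_
  have hy' : y ∈ Icc x c := Ioo_subset_Icc_self hy
  exact ⟨hfc y hy', hf'x.trans (hf'_mono (left_mem_Icc.mpr hxc.le) hy' hy'.1)⟩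

theorem antitoneOn_wronskian {f f' g g' g'' k : ℝ → ℝ} {a : ℝ}
    (hf : ∀ x ≥ a, HasDerivAt f (f' x) x) (hf' : ∀ x ≥ a, HasDerivAt f' (k x * f x) x)
    (hg : ∀ x ≥ a, HasDerivAt g (g' x) x) (hg' : ∀ x ≥ a, HasDerivAt g' (g'' x) x)
    (hf_nonneg : ∀ x > a, 0 ≤ f x) (hkg : ∀ x > a, k x * g x ≤ g'' x) :
    AntitoneOn (fun x => f' x * g x - f x * g' x) (Ici a) := by
  refine antitoneOn_Ici_of_hasDerivAt
    (fun x hx => ((hf' x hx).mul (hg x hx)).sub ((hf x hx).mul (hg' x hx))) fun x hx => ?_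
  have := mul_le_mul_of_nonneg_left (hkg x hx) (hf_nonneg x hx)
  linarith

theorem le_mul_of_wronskian_le {f f' g g' : ℝ → ℝ} {a B : ℝ} (ha : 0 < a) (hB : 0 ≤ B)
    (hf : ∀ x ≥ a, HasDerivAt f (f' x) x) (hg : ∀ x ≥ a, HasDerivAt g (g' x) x)
    (hg_ge : ∀ x ≥ a, x ≤ g x) (hW : ∀ x ≥ a, f' x * g x - f x * g' x ≤ B) :
    ∀ x ≥ a, f x ≤ (f a / g a + B / a) * g x := by
  have hχ : AntitoneOn (fun x => f x / g x + B * x⁻¹) (Ici a) := by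
    refine antitoneOn_Ici_of_hasDerivAt
      (φ' := fun x => (f' x * g x - f x * g' x) / g x ^ 2 + B * -(x ^ 2)⁻¹)
      (fun x hx => ?_) fun x hx => ?_
    · have hx0 : 0 < x := ha.trans_le hx
      exact ((hf x hx).div (hg x hx) (hx0.trans_le (hg_ge x hx)).ne').add
        ((hasDerivAt_inv hx0.ne').const_mul B)
    · have hx0 : 0 < x := ha.trans hx
      have hgx := hg_ge x hx.le
      calc (f' x * g x - f x * g' x) / g x ^ 2 + B * -(x ^ 2)⁻¹
          ≤ B / g x ^ 2 - B / x ^ 2 := by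
            rw [mul_neg, ← div_eq_mul_inv, ← sub_eq_add_neg]; gcongr; exact hW x hx.le
        _ ≤ 0 := by rw [sub_nonpos]; gcongr
  intro x hx
  have hgx : 0 < g x := (ha.trans_le hx).trans_le (hg_ge x hx)
  rw [← div_le_iff₀ hgx]
  have hχx : f x / g x + B * x⁻¹ ≤ f a / g a + B * a⁻¹ := hχ self_mem_Ici hx hx
  have : 0 ≤ B * x⁻¹ := by have := ha.trans_le hx; positivity
  rw [div_eq_mul_inv B a]
  linarith

theorem self_le_mul_log {x : ℝ} (hx : exp 1 ≤ x) : x ≤ x * log x := by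
  have hx0 : 0 < x := (exp_pos 1).trans_le hx
  have : 1 ≤ log x := by rwa [le_log_iff_exp_le hx0]
  nlinarith

theorem mul_mul_log_le_inv {x c : ℝ} (hx : 0 < x) (hlog : 0 < log x)
    (hc : c ≤ 1 / (x ^ 2 * log x)) : c * (x * log x) ≤ x⁻¹ :=
  calc c * (x * log x) ≤ 1 / (x ^ 2 * log x) * (x * log x) := by gcongr
    _ = x⁻¹ := by field_simp

theorem stmt_7_general (R Λ : ℝ) (k f : ℝ → ℝ)
    (hk1 : ∀ r ∈ Set.Icc (0 : ℝ) R, 0 ≤ k r ∧ k r ≤ Λ)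
    (hk2 : ∀ r > R, 0 ≤ k r ∧ k r ≤ 1 / (r ^ 2 * Real.log r))
    (hf : ContDiff ℝ 2 f)
    (hf'' : ∀ r ≥ 0, deriv (deriv f) r = k r * f r)
    (hf0 : f 0 = 0) (hf'0 : deriv f 0 = 1) :
    ∃ C > (0 : ℝ), ∀ r ≥ max R (Real.exp 1), f r ≤ C * r * Real.log r := by
  have hfd : Differentiable ℝ f := hf.differentiable two_ne_zero
  have hf'd : Differentiable ℝ (deriv f) :=
    (hf.iterate_deriv' 1 1).differentiable one_ne_zero
  have hk0 : ∀ r ≥ 0, 0 ≤ k r := fun r hr =>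
    (le_or_gt r R).elim (fun h => (hk1 r ⟨hr, h⟩).1) fun h => (hk2 r h).1
  have hf_nonneg : ∀ r ≥ 0, 0 ≤ f r :=
    nonneg_of_deriv_pos_of_deriv_deriv_nonneg hfd hf'd hf0.ge (hf'0 ▸ one_pos)
      fun x hx hfx => hf'' x hx ▸ mul_nonneg (hk0 x hx) hfx
  set r₀ := max R (exp 1)
  have hr₀ : ∀ x ≥ r₀, 0 < x ∧ 0 < log x ∧ x ≤ x * log x := fun x hx =>
    have he : exp 1 ≤ x := (le_max_right _ _).trans hx
    have hx0 : 0 < x := (exp_pos 1).trans_le he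
    ⟨hx0, log_pos ((one_lt_exp_iff.mpr one_pos).trans_le he), self_le_mul_log he⟩
  set W := fun x => deriv f x * (x * log x) - f x * (log x + 1)
  have hW : AntitoneOn W (Ici r₀) :=
    antitoneOn_wronskian (fun x _ => (hfd x).hasDerivAt)
      (fun x hx => hf'' x (hr₀ x hx).1.le ▸ (hf'd x).hasDerivAt)
      (fun x hx => hasDerivAt_mul_log (hr₀ x hx).1.ne')
      (fun x hx => (hasDerivAt_log (hr₀ x hx).1.ne').add_const 1)
      (fun x hx => hf_nonneg x (hr₀ x hx.le).1.le)
      fun x hx => mul_mul_log_le_inv (hr₀ x hx.le).1 (hr₀ x hx.le).2.1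
        (hk2 x ((le_max_left _ _).trans_lt hx)).2
  set B := max (W r₀) 1
  have hbound := le_mul_of_wronskian_le (hr₀ r₀ le_rfl).1 (zero_le_one.trans (le_max_right _ 1))
    (fun x _ => (hfd x).hasDerivAt) (fun x hx => hasDerivAt_mul_log (hr₀ x hx).1.ne')
    (fun x hx => (hr₀ x hx).2.2) fun x hx => (hW self_mem_Ici hx hx).trans (le_max_left _ 1)
  refine ⟨_, ?_, fun r hr => (hbound r hr).trans_eq (mul_assoc _ _ _).symm⟩
  obtain ⟨hr₀0, hlog₀, -⟩ := hr₀ r₀ le_rfl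
  have := hf_nonneg r₀ hr₀0.le
  positivity

/-- Upper growth bound: if 0 ≤ k ≤ Λ on [0,R] and 0 ≤ k(r) ≤ 1/(r² log r) for r > R,
then the Jacobi field f with potential k satisfies f(r) ≤ C r log r for r ≥ max(R, e). -/
theorem stmt_7 (R Λ : ℝ) (hR : 1 < R) (hΛ : 0 ≤ Λ) (k f : ℝ → ℝ)
    (hk : Continuous k)
    (hk1 : ∀ r ∈ Set.Icc (0 : ℝ) R, 0 ≤ k r ∧ k r ≤ Λ)
    (hk2 : ∀ r > R, 0 ≤ k r ∧ k r ≤ 1 / (r ^ 2 * Real.log r))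
    (hf : ContDiff ℝ 2 f)
    (hf'' : ∀ r ≥ 0, deriv (deriv f) r = k r * f r)
    (hf0 : f 0 = 0) (hf'0 : deriv f 0 = 1) :
    ∃ C > (0 : ℝ), ∀ r ≥ max R (Real.exp 1), f r ≤ C * r * Real.log r :=
  stmt_7_general R Λ k f hk1 hk2 hf hf'' hf0 hf'0
end

section
/- Let R > 1 and Λ ≥ 0. Let k : ℝ → ℝ be continuous with 0 ≤ k(r) ≤ Λ for r ∈ [0,R] and 0 ≤ k(r) ≤ 1/(r² log r) for all r > R, and let f : ℝ → ℝ be twice continuously differentiable with f''(r) = k(r) f(r) for r ≥ 0, f(0) = 0 and f'(0) = 1. Then f > 0 on (0,∞) and the improper integral ∫_e^∞ 1/f(r) dr diverges (equals +∞). -/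
/-!
Since `k ≥ 0`, the Jacobi field `f` is convex wherever it is nonnegative, so it stays above its
tangent line `r` at `0`; in particular `f > 0`. Beyond `R`, the barrier `w = C r log r - f`
satisfies `w'' = C / r - k f ≥ C / r - f / (r ^ 2 log r) ≥ 0` wherever `w ≥ 0`, so for `C` large
the same convexity argument gives `f ≤ C r log r`. Finally `1 / (r log r)` is the derivative of
`log (log r)`, which is unbounded, so `∫ dr / f` diverges.
-/

open Real MeasureTheory Set Filter Topology

theorem monotoneOn_Icc_of_hasDerivAt_nonneg {g g' : ℝ → ℝ} {y z : ℝ}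
    (hg : ∀ w ∈ Icc y z, HasDerivAt g (g' w) w) (hg' : ∀ w ∈ Ioo y z, 0 ≤ g' w) :
    MonotoneOn g (Icc y z) :=
  monotoneOn_of_hasDerivWithinAt_nonneg (convex_Icc y z)
    (fun w hw ↦ (hg w hw).continuousAt.continuousWithinAt)
    (fun w hw ↦ (hg w (interior_subset hw)).hasDerivWithinAt)
    (fun w hw ↦ hg' w (by rwa [interior_Icc] at hw))

theorem tangent_le_of_secondDeriv_nonneg {g g' g'' : ℝ → ℝ} {y z : ℝ} (hyz : y ≤ z)
    (hg : ∀ w ∈ Icc y z, HasDerivAt g (g' w) w) (hg' : ∀ w ∈ Icc y z, HasDerivAt g' (g'' w) w)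
    (hg'' : ∀ w ∈ Ioo y z, 0 ≤ g'' w) :
    g' y ≤ g' z ∧ g y + (z - y) * g' y ≤ g z := by
  have hy : y ∈ Icc y z := left_mem_Icc.2 hyz
  have hz : z ∈ Icc y z := right_mem_Icc.2 hyz
  have hg'_mono : MonotoneOn g' (Icc y z) := monotoneOn_Icc_of_hasDerivAt_nonneg hg' hg''
  have hsub_mono : MonotoneOn (fun w ↦ g w - w * g' y) (Icc y z) :=
    monotoneOn_Icc_of_hasDerivAt_nonneg (fun w hw ↦ (hg w hw).sub (hasDerivAt_mul_const _))
      fun w hw ↦ sub_nonneg.2 (hg'_mono hy (Ioo_subset_Icc_self hw) hw.1.le)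
  have := hsub_mono hy hz hyz
  exact ⟨hg'_mono hy hz hyz, by linarith⟩

theorem tangent_le_of_secondDeriv_nonneg_of_nonneg {g g' g'' : ℝ → ℝ} {a : ℝ}
    (hg : ∀ x ≥ a, HasDerivAt g (g' x) x) (hg' : ∀ x ≥ a, HasDerivAt g' (g'' x) x)
    (hga : 0 ≤ g a) (hg'a : 0 < g' a) (hg'' : ∀ x > a, 0 ≤ g x → 0 ≤ g'' x)
    {x : ℝ} (hx : a ≤ x) : g a + (x - a) * g' a ≤ g x := by
  -- Continuous induction: just right of a point of `s`, `g' > 0` keeps `g ≥ 0`, hence `g'' ≥ 0`.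
  set s := {y | g a + (y - a) * g' a ≤ g y ∧ g' a ≤ g' y}
  have hcont : ∀ {φ φ' : ℝ → ℝ}, (∀ y ≥ a, HasDerivAt φ (φ' y) y) → ContinuousOn φ (Icc a x) :=
    fun hφ y hy ↦ (hφ y hy.1).continuousAt.continuousWithinAt
  have hclosed : IsClosed (s ∩ Icc a x) := by
    have := isClosed_Icc.isClosed_le (f := fun y ↦ (g a + (y - a) * g' a, g' a))
      (g := fun y ↦ (g y, g' y)) (by fun_prop) ((hcont hg).prodMk (hcont hg'))
    rwa [inter_comm]
  suffices Icc a x ⊆ s from (this (right_mem_Icc.2 hx)).1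
  refine hclosed.Icc_subset_of_forall_mem_nhdsWithin ⟨by simp, le_rfl⟩ ?_
  rintro y ⟨⟨hy_tangent, hy_deriv⟩, hay, -⟩
  obtain ⟨u, hyu, hu⟩ := exists_Ico_subset_of_mem_nhds
    ((hg' y hay).continuousAt.eventually (lt_mem_nhds (hg'a.trans_le hy_deriv))) (exists_gt y)
  refine mem_nhdsGT_iff_exists_Ioo_subset.2 ⟨u, hyu, fun z hz ↦ ?_⟩
  have hIcc : ∀ w ∈ Icc y z, a ≤ w := fun w hw ↦ hay.trans hw.1
  have hg_mono : MonotoneOn g (Icc y z) :=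
    monotoneOn_Icc_of_hasDerivAt_nonneg (fun w hw ↦ hg w (hIcc w hw))
      fun w hw ↦ (hu ⟨hw.1.le, hw.2.trans hz.2⟩).le
  have hgy : 0 ≤ g y := by nlinarith
  obtain ⟨hz_deriv, hz_tangent⟩ := tangent_le_of_secondDeriv_nonneg hz.1.le
    (fun w hw ↦ hg w (hIcc w hw)) (fun w hw ↦ hg' w (hIcc w hw))
    fun w hw ↦ hg'' w (hay.trans_lt hw.1)
      (hgy.trans (hg_mono (left_mem_Icc.2 hz.1.le) (Ioo_subset_Icc_self hw) hw.1.le))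
  have := mul_le_mul_of_nonneg_left hy_deriv (sub_nonneg.2 hz.1.le)
  exact ⟨by linarith, hy_deriv.trans hz_deriv⟩

section Jacobi

variable {k f f' : ℝ → ℝ}

theorem self_le_of_jacobi (hk : ∀ r > 0, 0 ≤ k r) (hf : ∀ r ≥ 0, HasDerivAt f (f' r) r)
    (hf' : ∀ r ≥ 0, HasDerivAt f' (k r * f r) r) (hf0 : f 0 = 0) (hf'0 : f' 0 = 1)
    {r : ℝ} (hr : 0 ≤ r) : r ≤ f r := by
  simpa [hf0, hf'0] using tangent_le_of_secondDeriv_nonneg_of_nonneg hf hf' hf0.ge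
    (hf'0 ▸ one_pos) (fun x hx hfx ↦ mul_nonneg (hk x hx) hfx) hr

theorem exists_le_mul_mul_log_of_jacobi {a : ℝ} (ha : 1 < a)
    (hk : ∀ r > a, 0 ≤ k r ∧ k r ≤ 1 / (r ^ 2 * log r))
    (hf : ∀ r ≥ a, HasDerivAt f (f' r) r) (hf' : ∀ r ≥ a, HasDerivAt f' (k r * f r) r) :
    ∃ C > 0, ∀ r ≥ a, f r ≤ C * (r * log r) := by
  have hloga : 0 < log a := log_pos ha
  set C := |f a| / (a * log a) + |f' a| + 1
  have hC : 0 < C := by positivity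
  have hga : f a ≤ C * (a * log a) := calc
    f a ≤ |f a| + (|f' a| + 1) * (a * log a) :=
      (le_abs_self _).trans (le_add_of_nonneg_right (by positivity))
    _ = C * (a * log a) := by simp only [C]; field_simp; ring
  have hg'a : f' a < C * (log a + 1) := calc
    f' a < |f' a| + 1 := by linarith [le_abs_self (f' a)]
    _ ≤ C := by simp only [C]; linarith [show 0 ≤ |f a| / (a * log a) by positivity]
    _ ≤ C * (log a + 1) := le_mul_of_one_le_right hC.le (by linarith)
  have hg'' : ∀ x > a, 0 ≤ C * (x * log x) - f x → 0 ≤ C * x⁻¹ - k x * f x := by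
    intro x hx hfx
    have hlogx : 0 < log x := log_pos (ha.trans hx)
    have hx0 : 0 < x := by linarith
    obtain ⟨hk0, hk1⟩ := hk x hx
    have : k x * f x ≤ 1 / (x ^ 2 * log x) * (C * (x * log x)) := by
      have : 0 ≤ C * (x * log x) := by positivity
      nlinarith
    have : 1 / (x ^ 2 * log x) * (C * (x * log x)) = C * x⁻¹ := by field_simp
    linarith
  have hne : ∀ x ≥ a, x ≠ 0 := fun x hx ↦ by linarith
  refine ⟨C, hC, fun r hr ↦ ?_⟩
  have := tangent_le_of_secondDeriv_nonneg_of_nonneg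
    (g := fun r ↦ C * (r * log r) - f r) (g' := fun r ↦ C * (log r + 1) - f' r)
    (fun x hx ↦ ((hasDerivAt_mul_log (hne x hx)).const_mul C).sub (hf x hx))
    (fun x hx ↦ (((hasDerivAt_log (hne x hx)).add_const 1).const_mul C).sub (hf' x hx))
    (sub_nonneg.2 hga) (sub_pos.2 hg'a) hg'' hr
  nlinarith [mul_nonneg (sub_nonneg.2 hr) (sub_pos.2 hg'a).le]

end Jacobi

theorem not_integrableOn_Ioi_inv_mul_log {a : ℝ} :
    ¬ IntegrableOn (fun x ↦ (x * log x)⁻¹) (Ioi a) := by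
  have hderiv : ∀ᶠ x in atTop, HasDerivAt (fun x ↦ log (log x)) (x * log x)⁻¹ x := by
    filter_upwards [Ioi_mem_atTop 1] with x hx
    have hx0 : x ≠ 0 := by linarith [mem_Ioi.1 hx]
    convert (hasDerivAt_log hx0).log (log_pos hx).ne' using 1
    rw [mul_inv, div_eq_mul_inv]
  exact not_integrableOn_of_tendsto_norm_atTop_of_deriv_isBigO_filter atTop (Ioi_mem_atTop a)
    (hderiv.mono fun x hx ↦ hx.differentiableAt)
    (tendsto_norm_atTop_atTop.comp (tendsto_log_atTop.comp tendsto_log_atTop))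
    (EventuallyEq.isBigO (hderiv.mono fun x hx ↦ hx.deriv))

theorem lintegral_Ioi_ofReal_one_div_eq_top_of_le_mul_mul_log {f : ℝ → ℝ} {a C : ℝ} (hC : 0 < C)
    (hf_pos : ∀ r > a, 0 < f r) (hf_le : ∀ r > a, f r ≤ C * (r * log r)) :
    ∫⁻ r in Ioi a, ENNReal.ofReal (1 / f r) = ⊤ := by
  have hbound_pos : ∀ r > a, 0 < C * (r * log r) := fun r hr ↦ (hf_pos r hr).trans_le (hf_le r hr)
  have hbound_not_int : ¬ IntegrableOn (fun r ↦ 1 / (C * (r * log r))) (Ioi a) := by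
    intro h
    have hC_mul : (fun r ↦ C * (1 / (C * (r * log r)))) = fun r ↦ (r * log r)⁻¹ := by
      ext r
      rw [one_div, mul_inv, ← mul_assoc, mul_inv_cancel₀ hC.ne', one_mul]
    exact not_integrableOn_Ioi_inv_mul_log (hC_mul ▸ h.const_mul C)
  have hbound_top : ∫⁻ r in Ioi a, ENNReal.ofReal (1 / (C * (r * log r))) = ⊤ := by
    by_contra h
    refine hbound_not_int ((lintegral_ofReal_ne_top_iff_integrable ?_ ?_).1 h)
    · exact Measurable.aestronglyMeasurable (by fun_prop)
    · exact ae_restrict_of_forall_mem measurableSet_Ioi fun r hr ↦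
        (one_div_pos.2 (hbound_pos r hr)).le
  refine top_unique (hbound_top.symm.trans_le (setLIntegral_mono' measurableSet_Ioi fun r hr ↦ ?_))
  exact ENNReal.ofReal_le_ofReal (one_div_le_one_div_of_le (hf_pos r hr) (hf_le r hr))

theorem stmt_8_general (R Λ : ℝ) (hR : 1 < R) (k f : ℝ → ℝ)
    (hk1 : ∀ r ∈ Set.Icc (0 : ℝ) R, 0 ≤ k r ∧ k r ≤ Λ)
    (hk2 : ∀ r > R, 0 ≤ k r ∧ k r ≤ 1 / (r ^ 2 * Real.log r))
    (hf : ContDiff ℝ 2 f)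
    (hf'' : ∀ r ≥ 0, deriv (deriv f) r = k r * f r)
    (hf0 : f 0 = 0) (hf'0 : deriv f 0 = 1) :
    (∀ r > 0, 0 < f r) ∧
      ∫⁻ r in Set.Ioi (Real.exp 1), ENNReal.ofReal (1 / f r) = ⊤ := by
  have hf_deriv : ∀ r, HasDerivAt f (deriv f r) r :=
    fun r ↦ (hf.differentiable two_ne_zero r).hasDerivAt
  have hf_deriv2 : ∀ r ≥ 0, HasDerivAt (deriv f) (k r * f r) r :=
    fun r hr ↦ hf'' r hr ▸ (hf.differentiable_deriv_two r).hasDerivAt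
  have hk_nonneg : ∀ r > 0, 0 ≤ k r := fun r hr ↦
    (le_or_gt r R).elim (fun h ↦ (hk1 r ⟨hr.le, h⟩).1) fun h ↦ (hk2 r h).1
  have hf_pos : ∀ r > 0, 0 < f r := fun r hr ↦
    hr.trans_le (self_le_of_jacobi hk_nonneg (fun r _ ↦ hf_deriv r) hf_deriv2 hf0 hf'0 hr.le)
  obtain ⟨C, hC, hf_le⟩ := exists_le_mul_mul_log_of_jacobi hR hk2 (fun r _ ↦ hf_deriv r)
    fun r hr ↦ hf_deriv2 r (by linarith)
  refine ⟨hf_pos, top_unique ?_⟩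
  calc ⊤ = ∫⁻ r in Ioi (max R (exp 1)), ENNReal.ofReal (1 / f r) :=
        (lintegral_Ioi_ofReal_one_div_eq_top_of_le_mul_mul_log hC
          (fun r hr ↦ hf_pos r (by linarith [le_max_left R (exp 1)]))
          fun r hr ↦ hf_le r ((le_max_left _ _).trans hr.le)).symm
    _ ≤ _ := lintegral_mono_set (Ioi_subset_Ioi (le_max_right _ _))

/-- Recurrence criterion: if 0 ≤ k ≤ Λ on [0,R] and 0 ≤ k(r) ≤ 1/(r² log r) for r > R,
then the Jacobi field f with potential k is positive on (0,∞) and ∫_e^∞ dr/f(r) = +∞. -/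
theorem stmt_8 (R Λ : ℝ) (hR : 1 < R) (hΛ : 0 ≤ Λ) (k f : ℝ → ℝ)
    (hk : Continuous k)
    (hk1 : ∀ r ∈ Set.Icc (0 : ℝ) R, 0 ≤ k r ∧ k r ≤ Λ)
    (hk2 : ∀ r > R, 0 ≤ k r ∧ k r ≤ 1 / (r ^ 2 * Real.log r))
    (hf : ContDiff ℝ 2 f)
    (hf'' : ∀ r ≥ 0, deriv (deriv f) r = k r * f r)
    (hf0 : f 0 = 0) (hf'0 : deriv f 0 = 1) :
    (∀ r > 0, 0 < f r) ∧
      ∫⁻ r in Set.Ioi (Real.exp 1), ENNReal.ofReal (1 / f r) = ⊤ :=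
  stmt_8_general R Λ hR k f hk1 hk2 hf hf'' hf0 hf'0
end
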